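/- Let f(z) = z^n with n ≥ 2 and let f_t(z) = z^n + t(a+ib)z̄ with t > 0 and (a,b) ≠ (0,0). Define G_t(z) = −2i(f'(z))² conj(f''(z)) + 2ti(a+ib) f''(z) conj(f'(z)). Then G_t(z) = −2i n²(n−1) |z|^{2n−4} (n z^n − t(a+ib) z̄), and the set of nonzero zeros of G_t has exactly n + 1 elements. -/

import Mathlib

/-!
Pulling `|z|^{2n-4} = (z z̄)^{n-2}` out of both terms of `G_t` gives the factorization. A nonzero
zero therefore solves `n z^n = c z̄` with `c = t(a+ib) ≠ 0`. Taking moduli forces `|z| = r` with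
`n r^{n-1} = |c|`, and multiplying by `z` (so that `z z̄ = r²`) turns the equation into
`z^{n+1} = c r² / n`. Conversely every root of that equation has modulus `r`, so the nonzero zeros
of `G_t` are exactly the `n + 1` distinct `(n+1)`-st roots of `c r² / n`.
-/

open Complex ComplexConjugate

noncomputable section

/-- `G_t` for `f(z) = z^n`, via `f'(z) = n z^{n-1}`, `f''(z) = n(n-1) z^{n-2}`. -/
def GtPow (n : ℕ) (a b t : ℝ) (z : ℂ) : ℂ :=
  -2 * Complex.I * ((n : ℂ) * z ^ (n - 1)) ^ 2 *
      (starRingEnd ℂ) ((n : ℂ) * ((n : ℂ) - 1) * z ^ (n - 2)) +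
    2 * t * Complex.I * (a + Complex.I * b) * ((n : ℂ) * ((n : ℂ) - 1) * z ^ (n - 2)) *
      (starRingEnd ℂ) ((n : ℂ) * z ^ (n - 1))

lemma ncard_setOf_pow_eq {k : ℕ} (hk : 0 < k) {w : ℂ} (hw : w ≠ 0) :
    {z : ℂ | z ^ k = w}.ncard = k := by
  classical
  have hζ := Complex.isPrimitiveRoot_exp k hk.ne'
  have hroots : {z : ℂ | z ^ k = w} = ↑(Polynomial.nthRoots k w).toFinset := by
    ext z
    simp [Polynomial.mem_nthRoots hk]
  rw [hroots, Set.ncard_coe_finset, Multiset.toFinset_card_of_nodup (hζ.nthRoots_nodup hw),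
    hζ.card_nthRoots, if_pos (IsAlgClosed.exists_pow_nat_eq w hk)]

lemma GtPow_eq {n : ℕ} (hn : 2 ≤ n) (a b t : ℝ) (z : ℂ) :
    GtPow n a b t z = -2 * I * (n : ℂ) ^ 2 * ((n : ℂ) - 1) * ((‖z‖ : ℝ) : ℂ) ^ (2 * n - 4) *
      ((n : ℂ) * z ^ n - t * (a + I * b) * conj z) := by
  obtain ⟨m, rfl⟩ : ∃ m, n = m + 2 := ⟨n - 2, by omega⟩
  rw [show 2 * (m + 2) - 4 = 2 * m by omega, pow_mul, ← mul_conj', GtPow,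
    show m + 2 - 1 = m + 1 by omega, Nat.add_sub_cancel]
  simp only [map_mul, map_pow, map_sub, map_natCast, map_one]
  ring

lemma GtPow_eq_zero_iff {n : ℕ} (hn : 2 ≤ n) (a b t : ℝ) {z : ℂ} (hz : z ≠ 0) :
    GtPow n a b t z = 0 ↔ (n : ℂ) * z ^ n = t * (a + I * b) * conj z := by
  have hn1 : (n : ℂ) - 1 ≠ 0 := sub_ne_zero.mpr (by exact_mod_cast (by omega : n ≠ 1))
  have hn0 : n ≠ 0 := by omega
  rw [GtPow_eq hn, mul_eq_zero, sub_eq_zero, or_iff_right]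
  simp [hn0, hn1, hz]

section PowerEquation

variable {n : ℕ} {c z : ℂ} {r : ℝ}

lemma norm_eq_of_natCast_mul_pow_eq (hn : 2 ≤ n) (hr : 0 < r) (hrc : r ^ (n - 1) = ‖c‖ / n)
    (hz : z ≠ 0) (h : (n : ℂ) * z ^ n = c * conj z) : ‖z‖ = r := by
  refine (pow_left_inj₀ (norm_nonneg z) hr.le (by omega : n - 1 ≠ 0)).mp ?_
  have hnorm := congrArg norm h
  rw [norm_mul, norm_mul, norm_natCast, norm_pow, norm_conj,
    ← pow_sub_one_mul (by omega : n ≠ 0), ← mul_assoc] at hnorm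
  rw [hrc, eq_div_iff (by positivity), mul_comm]
  exact mul_right_cancel₀ (norm_ne_zero_iff.mpr hz) hnorm

lemma norm_eq_of_pow_succ_eq (hn : n ≠ 0) (hr : 0 < r) (hrc : r ^ (n - 1) = ‖c‖ / n)
    (h : z ^ (n + 1) = c * r ^ 2 / n) : ‖z‖ = r := by
  refine (pow_left_inj₀ (norm_nonneg z) hr.le n.succ_ne_zero).mp ?_
  rw [← norm_pow, h, norm_div, norm_mul, norm_natCast, norm_pow, norm_real,
    Real.norm_of_nonneg hr.le, mul_div_right_comm, ← hrc, ← pow_add]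
  congr 1
  omega

lemma natCast_mul_pow_eq_mul_conj_iff (hn : 2 ≤ n) (hr : 0 < r) (hrc : r ^ (n - 1) = ‖c‖ / n)
    (hz : z ≠ 0) : (n : ℂ) * z ^ n = c * conj z ↔ z ^ (n + 1) = c * r ^ 2 / n := by
  have hn0 : (n : ℂ) ≠ 0 := by exact_mod_cast (by omega : n ≠ 0)
  have hzz := mul_conj' z
  constructor
  · intro h
    rw [norm_eq_of_natCast_mul_pow_eq hn hr hrc hz h] at hzz
    rw [eq_div_iff hn0]
    linear_combination z * h + c * hzz
  · intro h
    rw [norm_eq_of_pow_succ_eq (by omega) hr hrc h] at hzz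
    rw [eq_div_iff hn0] at h
    exact mul_left_cancel₀ hz (by linear_combination h - c * hzz)

lemma setOf_natCast_mul_pow_eq_mul_conj (hn : 2 ≤ n) (hc : c ≠ 0) (hr : 0 < r)
    (hrc : r ^ (n - 1) = ‖c‖ / n) :
    {z : ℂ | z ≠ 0 ∧ (n : ℂ) * z ^ n = c * conj z} = {z : ℂ | z ^ (n + 1) = c * r ^ 2 / n} := by
  ext z
  refine ⟨fun ⟨hz, h⟩ ↦ (natCast_mul_pow_eq_mul_conj_iff hn hr hrc hz).mp h, fun h ↦ ?_⟩
  have hn0 : n ≠ 0 := by omega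
  have hw : c * (r : ℂ) ^ 2 / n ≠ 0 := by simp [hc, hr.ne', hn0]
  have hz : z ≠ 0 := fun hz ↦ hw (by rw [← h, hz, zero_pow n.succ_ne_zero])
  exact ⟨hz, (natCast_mul_pow_eq_mul_conj_iff hn hr hrc hz).mpr h⟩

end PowerEquation

theorem Gt_of_power (n : ℕ) (hn : 2 ≤ n) (a b t : ℝ) (ht : 0 < t) (hab : (a, b) ≠ (0, 0)) :
    (∀ z : ℂ,
      GtPow n a b t z =
        -2 * Complex.I * (n : ℂ) ^ 2 * ((n : ℂ) - 1) *
          (((‖z‖ : ℝ) : ℂ) ^ (2 * n - 4)) *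
          ((n : ℂ) * z ^ n - (t : ℂ) * (a + Complex.I * b) * (starRingEnd ℂ) z)) ∧
    {z : ℂ | z ≠ 0 ∧ GtPow n a b t z = 0}.ncard = n + 1 := by
  refine ⟨GtPow_eq hn a b t, ?_⟩
  set c : ℂ := t * (a + I * b)
  have hc : c ≠ 0 := by
    refine mul_ne_zero (by exact_mod_cast ht.ne') fun h ↦ hab ?_
    simp_all [Complex.ext_iff]
  set r : ℝ := (‖c‖ / n) ^ ((n - 1 : ℕ) : ℝ)⁻¹
  have hcn : 0 < ‖c‖ / n := div_pos (norm_pos_iff.mpr hc) (by positivity)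
  have hrc : r ^ (n - 1) = ‖c‖ / n := Real.rpow_inv_natCast_pow hcn.le (by omega)
  have hr : 0 < r := Real.rpow_pos_of_pos hcn _
  have hzeros : {z : ℂ | z ≠ 0 ∧ GtPow n a b t z = 0} =
      {z : ℂ | z ≠ 0 ∧ (n : ℂ) * z ^ n = c * conj z} :=
    Set.ext fun z ↦ and_congr_right (GtPow_eq_zero_iff hn a b t)
  have hn0 : n ≠ 0 := by omega
  rw [hzeros, setOf_natCast_mul_pow_eq_mul_conj hn hc hr hrc,
    ncard_setOf_pow_eq n.succ_pos (by simp [hc, hr.ne', hn0])]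

end
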